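/- Let F be a distribution function on ℝ with F(0) = 0 and fix N ∈ ℕ. Then ∫_{(0, 1/e_{[N]}]} G_N(|log u|) dF(u) = ∫_{(0, 1/e_{[N]}]} F(u)·(−g_N(u)) du, where for u ∈ (0, 1/e_{[N]}], g_N(u) = −(1/u)·(log_{[N]}(−log u) + ∏_{j=1}^{N−1} 1/log_{[j]}(−log u)); both sides are finite or infinite simultaneously. -/

import Mathlib

/-!
For `0 < u ≤ 1/e_[N]` put `s = -log u ≥ e_[N-1]`; then `G_N(|log u|) = s · log_[N] s`, a function
of `u` that vanishes at `u = 1/e_[N]` (as `log_[N] e_[N-1] = 0`) and whose derivative is `g_N(u)`.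
Hence `G_N(|log u|) = ∫_u^{1/e_[N]} -g_N(t) dt`, and Tonelli on the triangle `{u ≤ t}` turns the
`dF(u)`-integral into `∫ -g_N(t) F((0, t]) dt` with `F((0, t]) = F t` because `F 0 = 0`. Both
sides are integrals of nonnegative functions in `ℝ≥0∞`, so they agree also when infinite.
-/

/-- Tower of exponentials: `e_[0] = 1`, `e_[N] = exp (e_[N-1])`. -/
noncomputable def towerE : ℕ → ℝ
  | 0 => 1
  | n + 1 => Real.exp (towerE n)

/-- `N`-fold iterated logarithm. -/
noncomputable def iterLog (N : ℕ) (t : ℝ) : ℝ := Real.log^[N] t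

/-- `G_N(t) = 0` for `t ≤ e_[N-1]` and `G_N(t) = t · log_[N](t)` for `t > e_[N-1]`. -/
noncomputable def G (N : ℕ) (t : ℝ) : ℝ :=
  if t ≤ towerE (N - 1) then 0 else t * iterLog N t

/-- `-g_N(u)` for `u ∈ (0, 1/e_[N]]`, where
`g_N(u) = -(1/u)(log_[N](-log u) + ∏_{j=1}^{N-1} 1/log_[j](-log u))`. -/
noncomputable def negGN (N : ℕ) (u : ℝ) : ℝ :=
  (1 / u) * (iterLog N (-Real.log u) +
    ∏ j ∈ Finset.Icc 1 (N - 1), (iterLog j (-Real.log u))⁻¹)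

open Real Set MeasureTheory
open scoped ENNReal

lemma StieltjesFunction.lintegral_setLIntegral_Ioc (F : StieltjesFunction ℝ) (a b : ℝ)
    {f : ℝ → ℝ≥0∞} (hf : Measurable f) :
    ∫⁻ u in Ioc a b, (∫⁻ t in Ioc u b, f t) ∂F.measure
      = ∫⁻ t in Ioc a b, ENNReal.ofReal (F t - F a) * f t := by
  set k : ℝ × ℝ → ℝ≥0∞ := {p | p.1 ≤ p.2}.indicator fun p => f p.2
  have hk : Measurable k :=
    (hf.comp measurable_snd).indicator (measurableSet_le measurable_fst measurable_snd)
  -- Closing the Lebesgue interval at `u` costs nothing and makes the `u`-section of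
  -- `{u ≤ t}` equal to `Ioc a t`, whose `F`-mass is `F t - F a` (not `F (t-) - F a`).
  have inner_eq : ∀ u ∈ Ioc a b, ∫⁻ t in Ioc u b, f t = ∫⁻ t in Ioc a b, k (u, t) := by
    intro u hu
    have hsub : Ioc a b ∩ Ici u = Icc u b := by
      ext t; simp only [mem_inter_iff, mem_Ioc, mem_Ici, mem_Icc]
      constructor
      · rintro ⟨⟨-, htb⟩, hut⟩; exact ⟨hut, htb⟩
      · rintro ⟨hut, htb⟩; exact ⟨⟨hu.1.trans_le hut, htb⟩, hut⟩
    have hk_u : (fun t => k (u, t)) = (Ici u).indicator f := by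
      ext t; simp [k, indicator_apply]
    rw [hk_u, lintegral_indicator measurableSet_Ici, Measure.restrict_restrict measurableSet_Ici,
      inter_comm, hsub, Measure.restrict_congr_set Ioc_ae_eq_Icc]
  have outer_eq : ∀ t ∈ Ioc a b,
      ∫⁻ u in Ioc a b, k (u, t) ∂F.measure = ENNReal.ofReal (F t - F a) * f t := by
    intro t ht
    have hk_t : (fun u => k (u, t)) = (Iic t).indicator fun _ => f t := by
      ext u; simp [k, indicator_apply]
    have hsub : Ioc a b ∩ Iic t = Ioc a t := by
      rw [Ioc_inter_Iic, min_eq_right ht.2]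
    rw [hk_t, lintegral_indicator measurableSet_Iic, Measure.restrict_restrict measurableSet_Iic,
      inter_comm, hsub, setLIntegral_const, F.measure_Ioc, mul_comm]
  calc ∫⁻ u in Ioc a b, (∫⁻ t in Ioc u b, f t) ∂F.measure
      = ∫⁻ u in Ioc a b, (∫⁻ t in Ioc a b, k (u, t)) ∂F.measure :=
        setLIntegral_congr_fun measurableSet_Ioc inner_eq
    _ = ∫⁻ t in Ioc a b, ∫⁻ u in Ioc a b, k (u, t) ∂F.measure :=
        lintegral_lintegral_swap (f := fun u t => k (u, t)) hk.aemeasurable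
    _ = ∫⁻ t in Ioc a b, ENNReal.ofReal (F t - F a) * f t :=
        setLIntegral_congr_fun measurableSet_Ioc outer_eq

lemma towerE_pos (n : ℕ) : 0 < towerE n := by
  cases n with
  | zero => exact one_pos
  | succ n => exact exp_pos _

lemma towerE_monotone : Monotone towerE :=
  monotone_nat_of_le_succ fun n => by
    have := add_one_le_exp (towerE n)
    change towerE n ≤ exp (towerE n)
    linarith

lemma iterLog_succ (n : ℕ) (s : ℝ) : iterLog (n + 1) s = iterLog n (log s) :=
  Function.iterate_succ_apply log n s

lemma iterLog_succ' (n : ℕ) (s : ℝ) : iterLog (n + 1) s = log (iterLog n s) :=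
  Function.iterate_succ_apply' log n s

@[fun_prop]
lemma measurable_iterLog (n : ℕ) : Measurable (iterLog n) :=
  measurable_log.iterate n

lemma one_le_iterLog_of_towerE_le : ∀ {n : ℕ} {s : ℝ}, towerE n ≤ s → 1 ≤ iterLog n s
  | 0, _, hs => hs
  | n + 1, s, hs => by
    rw [iterLog_succ]
    exact one_le_iterLog_of_towerE_le ((le_log_iff_exp_le (towerE_pos _ |>.trans_le hs)).2 hs)

lemma iterLog_pos_of_towerE_le {n j : ℕ} {s : ℝ} (hs : towerE n ≤ s) (hj : j ≤ n) :
    0 < iterLog j s :=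
  one_pos.trans_le (one_le_iterLog_of_towerE_le ((towerE_monotone hj).trans hs))

lemma iterLog_succ_nonneg_of_towerE_le {n : ℕ} {s : ℝ} (hs : towerE n ≤ s) :
    0 ≤ iterLog (n + 1) s := by
  rw [iterLog_succ']
  exact log_nonneg (one_le_iterLog_of_towerE_le hs)

lemma iterLog_succ_towerE : ∀ n : ℕ, iterLog (n + 1) (towerE n) = 0
  | 0 => by simp [iterLog, towerE]
  | n + 1 => by
    rw [iterLog_succ]
    change iterLog (n + 1) (log (exp (towerE n))) = 0
    rw [log_exp, iterLog_succ_towerE n]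

lemma hasDerivAt_iterLog : ∀ (n : ℕ) {s : ℝ}, (∀ j < n, 0 < iterLog j s) →
    HasDerivAt (iterLog n) (∏ j ∈ Finset.range n, (iterLog j s)⁻¹) s
  | 0, s, _ => by rw [Finset.prod_range_zero]; exact hasDerivAt_id s
  | n + 1, s, hpos => by
    have hlog : ∀ j < n, 0 < iterLog j (log s) := fun j hj => by
      rw [← iterLog_succ]; exact hpos (j + 1) (by omega)
    have hcomp := (hasDerivAt_iterLog n hlog).comp s (hasDerivAt_log (hpos 0 n.succ_pos).ne')
    rw [show iterLog (n + 1) = iterLog n ∘ log from funext (iterLog_succ n),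
      Finset.prod_range_succ']
    simp only [iterLog_succ]
    exact hcomp

lemma continuousAt_iterLog {n : ℕ} {s : ℝ} (hpos : ∀ j < n, 0 < iterLog j s) :
    ContinuousAt (iterLog n) s :=
  (hasDerivAt_iterLog n hpos).continuousAt

lemma measurable_negGN (N : ℕ) : Measurable (negGN N) := by
  unfold negGN
  fun_prop

lemma G_succ_of_towerE_le {n : ℕ} {s : ℝ} (hs : towerE n ≤ s) :
    G (n + 1) s = s * iterLog (n + 1) s := by
  rw [G, Nat.add_sub_cancel]
  split_ifs with h
  · rw [le_antisymm h hs, iterLog_succ_towerE, mul_zero]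
  · rfl

lemma hasDerivAt_mul_iterLog_succ {n : ℕ} {s : ℝ} (hs : towerE n ≤ s) :
    HasDerivAt (fun s => s * iterLog (n + 1) s)
      (iterLog (n + 1) s + ∏ j ∈ Finset.Icc 1 n, (iterLog j s)⁻¹) s := by
  have hpos : ∀ j < n + 1, 0 < iterLog j s := fun j hj =>
    iterLog_pos_of_towerE_le hs (Nat.lt_succ_iff.1 hj)
  refine ((hasDerivAt_id s).mul (hasDerivAt_iterLog (n + 1) hpos)).congr_deriv ?_
  have hs0 : s ≠ 0 := (towerE_pos n).trans_le hs |>.ne'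
  rw [Finset.prod_range_eq_mul_Ico _ (Nat.add_one_pos n), Finset.Ico_add_one_right_eq_Icc]
  change 1 * _ + s * (s⁻¹ * _) = _
  rw [one_mul, ← mul_assoc, mul_inv_cancel₀ hs0, one_mul]

lemma towerE_le_neg_log {n : ℕ} {t : ℝ} (ht : 0 < t) (htb : t ≤ (towerE (n + 1))⁻¹) :
    towerE n ≤ -log t := by
  have := log_le_log ht htb
  rw [log_inv, towerE, log_exp] at this
  linarith

lemma hasDerivAt_log_mul_iterLog_neg_log {n : ℕ} {t : ℝ} (ht : 0 < t)
    (hs : towerE n ≤ -log t) :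
    HasDerivAt (fun t => log t * iterLog (n + 1) (-log t)) (negGN (n + 1) t) t := by
  have h := ((hasDerivAt_mul_iterLog_succ hs).comp t (hasDerivAt_log ht.ne').fun_neg).fun_neg
  rw [show (fun t => log t * iterLog (n + 1) (-log t))
      = fun t => -(-log t * iterLog (n + 1) (-log t)) by ext; ring]
  refine h.congr_deriv ?_
  simp only [negGN, Nat.add_sub_cancel]
  ring

lemma negGN_succ_nonneg {n : ℕ} {t : ℝ} (ht : 0 < t) (hs : towerE n ≤ -log t) :
    0 ≤ negGN (n + 1) t := by
  have h₁ := iterLog_succ_nonneg_of_towerE_le hs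
  have h₂ : 0 ≤ ∏ j ∈ Finset.Icc 1 n, (iterLog j (-log t))⁻¹ := Finset.prod_nonneg fun j hj =>
    (inv_pos.2 (iterLog_pos_of_towerE_le hs (Finset.mem_Icc.1 hj).2)).le
  rw [negGN, Nat.add_sub_cancel]
  positivity

lemma continuousAt_negGN_succ {n : ℕ} {t : ℝ} (ht : 0 < t) (hs : towerE n ≤ -log t) :
    ContinuousAt (negGN (n + 1)) t := by
  have hpos : ∀ j ≤ n, 0 < iterLog j (-log t) := fun j hj => iterLog_pos_of_towerE_le hs hj
  have hD : ContinuousAt (fun s => iterLog (n + 1) s + ∏ j ∈ Finset.Icc 1 n, (iterLog j s)⁻¹)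
      (-log t) :=
    (continuousAt_iterLog fun j hj => hpos j (Nat.lt_succ_iff.1 hj)).add <|
      tendsto_finsetProd _ fun j hj =>
        (continuousAt_iterLog fun i hi => hpos i (hi.le.trans (Finset.mem_Icc.1 hj).2)).inv₀
          (hpos j (Finset.mem_Icc.1 hj).2).ne'
  unfold negGN
  rw [Nat.add_sub_cancel]
  exact (continuousAt_const.div continuousAt_id ht.ne').mul
    (hD.comp (f := fun t => -log t) (continuousAt_log ht.ne').neg)

lemma integrableOn_Icc_negGN_succ {n : ℕ} {u : ℝ} (hu : 0 < u) :
    IntegrableOn (negGN (n + 1)) (Icc u (towerE (n + 1))⁻¹) :=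
  ContinuousOn.integrableOn_Icc fun _ ht =>
    (continuousAt_negGN_succ (hu.trans_le ht.1)
      (towerE_le_neg_log (hu.trans_le ht.1) ht.2)).continuousWithinAt

lemma integral_negGN_succ {n : ℕ} {u : ℝ} (hu : 0 < u) (hub : u ≤ (towerE (n + 1))⁻¹) :
    ∫ t in u..(towerE (n + 1))⁻¹, negGN (n + 1) t = G (n + 1) |log u| := by
  have hderiv : ∀ t ∈ uIcc u (towerE (n + 1))⁻¹,
      HasDerivAt (fun t => log t * iterLog (n + 1) (-log t)) (negGN (n + 1) t) t := by
    intro t ht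
    rw [uIcc_of_le hub] at ht
    have ht0 : 0 < t := hu.trans_le ht.1
    exact hasDerivAt_log_mul_iterLog_neg_log ht0 (towerE_le_neg_log ht0 ht.2)
  have hs := towerE_le_neg_log hu hub
  have hlog_neg : log u < 0 := by linarith [towerE_pos n]
  have hlog_top : -log (towerE (n + 1))⁻¹ = towerE n := by rw [log_inv, neg_neg, towerE, log_exp]
  rw [intervalIntegral.integral_eq_sub_of_hasDerivAt hderiv
      ((intervalIntegrable_iff_integrableOn_Icc_of_le hub).2 (integrableOn_Icc_negGN_succ hu)),
    hlog_top, iterLog_succ_towerE, abs_of_neg hlog_neg, G_succ_of_towerE_le hs]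
  ring

lemma ofReal_G_eq_lintegral_negGN {n : ℕ} {u : ℝ} (hu : u ∈ Ioc 0 (towerE (n + 1))⁻¹) :
    ENNReal.ofReal (G (n + 1) |log u|)
      = ∫⁻ t in Ioc u (towerE (n + 1))⁻¹, ENNReal.ofReal (negGN (n + 1) t) := by
  have hnonneg : 0 ≤ᵐ[volume.restrict (Ioc u (towerE (n + 1))⁻¹)] negGN (n + 1) := by
    filter_upwards [ae_restrict_mem measurableSet_Ioc] with t ht
    have ht0 : 0 < t := hu.1.trans ht.1
    exact negGN_succ_nonneg ht0 (towerE_le_neg_log ht0 ht.2)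
  rw [← integral_negGN_succ hu.1 hu.2, intervalIntegral.integral_of_le hu.2,
    ofReal_integral_eq_lintegral_ofReal
      ((integrableOn_Icc_negGN_succ hu.1).mono_set Ioc_subset_Icc_self) hnonneg]

theorem stieltjes_ibp_lower_general (N : ℕ) (hN : 1 ≤ N) (F : StieltjesFunction ℝ)
    (hF0 : F 0 = 0) :
    ∫⁻ u in Set.Ioc (0 : ℝ) (towerE N)⁻¹,
        ENNReal.ofReal (G N |Real.log u|) ∂F.measure
      = ∫⁻ u in Set.Ioc (0 : ℝ) (towerE N)⁻¹,
        ENNReal.ofReal (F u * negGN N u) := by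
  obtain ⟨n, rfl⟩ := Nat.exists_eq_add_of_le' hN
  calc _ = ∫⁻ u in Ioc 0 (towerE (n + 1))⁻¹,
          (∫⁻ t in Ioc u (towerE (n + 1))⁻¹, ENNReal.ofReal (negGN (n + 1) t)) ∂F.measure :=
        setLIntegral_congr_fun measurableSet_Ioc fun u hu => ofReal_G_eq_lintegral_negGN hu
    _ = ∫⁻ t in Ioc 0 (towerE (n + 1))⁻¹,
          ENNReal.ofReal (F t - F 0) * ENNReal.ofReal (negGN (n + 1) t) :=
        F.lintegral_setLIntegral_Ioc 0 _ (measurable_negGN _).ennreal_ofReal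
    _ = _ := setLIntegral_congr_fun measurableSet_Ioc fun t ht => by
        rw [hF0, sub_zero, ← ENNReal.ofReal_mul (hF0 ▸ F.mono ht.1.le)]

/-- Integration-by-parts identity near zero:
`∫_{(0,1/e_[N]]} G_N(|log u|) dF(u) = ∫_{(0,1/e_[N]]} F(u)·(-g_N(u)) du` for a
distribution function `F` with `F(0) = 0`; both nonnegative integrals are
simultaneously finite or infinite. -/
theorem stieltjes_ibp_lower (N : ℕ) (hN : 1 ≤ N) (F : StieltjesFunction ℝ)
    (hF0 : F 0 = 0) (hF1 : Filter.Tendsto F Filter.atTop (nhds 1))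
    (hFnonneg : ∀ u : ℝ, 0 ≤ F u) :
    ∫⁻ u in Set.Ioc (0 : ℝ) (towerE N)⁻¹,
        ENNReal.ofReal (G N |Real.log u|) ∂F.measure
      = ∫⁻ u in Set.Ioc (0 : ℝ) (towerE N)⁻¹,
        ENNReal.ofReal (F u * negGN N u) :=
  stieltjes_ibp_lower_general N hN F hF0
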